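/- With A = H_M† H_M ≻ 0 and P > 0, setting Z* = (tr(A^{-1/2})/P)·A^{1/2}, any Hermitian Z ≻ 0 with tr(Z⁻¹) ≤ P satisfies tr(A⁻¹ Z) ≥ tr(A⁻¹ Z*) = tr(A^{-1/2})²/P (lower bound part of the unconstrained-secrecy filter design). -/

import Mathlib

/-
Write `S = A^{1/2}`. Then `A⁻¹ = S⁻¹ S⁻¹`, so `tr(A⁻¹ Z*) = tr(S⁻¹)² / P` and
`tr(A⁻¹ Z) = tr(S⁻¹ Z S⁻¹)`. Cauchy–Schwarz for the inner product `⟪X, Y⟫ = tr(Y Z Xᴴ)` induced by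
`Z ≻ 0`, applied to `X = Z⁻¹` and `Y = S⁻¹`, gives
`|tr S⁻¹|² ≤ tr(Z⁻¹) · tr(S⁻¹ Z S⁻¹) ≤ P · tr(A⁻¹ Z)`.
-/

open Matrix
open scoped ComplexOrder

noncomputable def Matrix.PosSemidef.sqrt {n : Type*} {𝕜 : Type*} [Fintype n] [RCLike 𝕜]
    [DecidableEq n] {A : Matrix n n 𝕜} (hA : A.PosSemidef) : Matrix n n 𝕜 :=
  hA.1.eigenvectorUnitary.1 * diagonal ((↑) ∘ (√·) ∘ hA.1.eigenvalues) *
    (star hA.1.eigenvectorUnitary : Matrix n n 𝕜)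

namespace Matrix

variable {n 𝕜 : Type*} [Fintype n] [RCLike 𝕜]

lemma PosSemidef.norm_trace_mul_mul_conjTranspose_sq_le {M : Matrix n n 𝕜} (hM : M.PosSemidef)
    (X Y : Matrix n n 𝕜) :
    ‖(Y * M * Xᴴ).trace‖ ^ 2 ≤
      RCLike.re (X * M * Xᴴ).trace * RCLike.re (Y * M * Yᴴ).trace := by
  let := M.toMatrixSeminormedAddCommGroup hM
  let := M.toMatrixInnerProductSpace hM
  have := inner_mul_inner_self_le (𝕜 := 𝕜) X Y
  rwa [norm_inner_symm Y X, ← sq] at this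

variable [DecidableEq n] {A : Matrix n n 𝕜}

lemma PosDef.norm_trace_sq_le (hA : A.PosDef) (B : Matrix n n 𝕜) :
    ‖B.trace‖ ^ 2 ≤ RCLike.re A⁻¹.trace * RCLike.re (B * A * Bᴴ).trace := by
  have hA_inv : A * A⁻¹ = 1 := mul_nonsing_inv _ (hA.isUnit.map detMonoidHom)
  simpa only [hA.1.inv.eq, mul_assoc, hA_inv, mul_one] using
    hA.posSemidef.norm_trace_mul_mul_conjTranspose_sq_le A⁻¹ B

lemma PosSemidef.sqrt_eq_cfc (hA : A.PosSemidef) : hA.sqrt = cfc Real.sqrt A := by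
  rw [hA.1.cfc_eq, IsHermitian.cfc, Unitary.conjStarAlgAut_apply]
  rfl

lemma PosSemidef.isHermitian_sqrt (hA : A.PosSemidef) : hA.sqrt.IsHermitian :=
  hA.sqrt_eq_cfc ▸ cfc_predicate _ _

lemma PosSemidef.sqrt_mul_self (hA : A.PosSemidef) : hA.sqrt * hA.sqrt = A := by
  have hA' : IsSelfAdjoint A := hA.1
  rw [hA.sqrt_eq_cfc, ← cfc_mul ..]
  conv_rhs => rw [← cfc_id' ℝ A]
  refine cfc_congr fun x hx => ?_
  obtain ⟨i, rfl⟩ := hA.1.spectrum_real_eq_range_eigenvalues ▸ hx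
  exact Real.mul_self_sqrt (hA.eigenvalues_nonneg i)

lemma PosDef.isUnit_sqrt (hA : A.PosDef) : IsUnit hA.posSemidef.sqrt := by
  refine (isUnit_iff_isUnit_det _).2 (isUnit_of_mul_isUnit_left (y := hA.posSemidef.sqrt.det) ?_)
  rw [← det_mul, hA.posSemidef.sqrt_mul_self]
  exact hA.isUnit.map detMonoidHom

lemma PosDef.inv_mul_sqrt (hA : A.PosDef) :
    A⁻¹ * hA.posSemidef.sqrt = hA.posSemidef.sqrt⁻¹ := by
  have hSS := hA.posSemidef.sqrt_mul_self
  set S := hA.posSemidef.sqrt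
  calc A⁻¹ * S = S⁻¹ * (S⁻¹ * S) := by rw [← hSS, mul_inv_rev, mul_assoc]
    _ = S⁻¹ := by rw [nonsing_inv_mul _ ((isUnit_iff_isUnit_det _).1 hA.isUnit_sqrt), mul_one]

lemma PosDef.trace_inv_mul_eq (hA : A.PosDef) (Z : Matrix n n 𝕜) :
    (A⁻¹ * Z).trace = (hA.posSemidef.sqrt⁻¹ * Z * hA.posSemidef.sqrt⁻¹ᴴ).trace := by
  rw [hA.posSemidef.isHermitian_sqrt.inv.eq, trace_mul_cycle, ← mul_inv_rev,
    hA.posSemidef.sqrt_mul_self]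

end Matrix

/-- Lower bound part of the unconstrained-secrecy filter design: with `A = H_Mᴴ H_M ≻ 0`,
`P > 0` and `Z* = (tr(A^{-1/2})/P) A^{1/2}`, every positive definite Hermitian `Z` with
`tr(Z⁻¹) ≤ P` satisfies `tr(A⁻¹ Z) ≥ tr(A⁻¹ Z*) = tr(A^{-1/2})²/P`. -/
theorem power_only_lower_bound {m : ℕ} (A : Matrix (Fin m) (Fin m) ℂ) (hA : A.PosDef)
    (P : ℝ) (hP : 0 < P)
    (Z : Matrix (Fin m) (Fin m) ℂ) (hZ : Z.PosDef) (hpow : (Z⁻¹.trace).re ≤ P) :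
    ((A⁻¹ * Z).trace).re ≥
        ((A⁻¹ * ((hA.posSemidef.sqrt⁻¹.trace / (P : ℂ)) • hA.posSemidef.sqrt)).trace).re ∧
      (A⁻¹ * ((hA.posSemidef.sqrt⁻¹.trace / (P : ℂ)) • hA.posSemidef.sqrt)).trace =
        hA.posSemidef.sqrt⁻¹.trace ^ 2 / (P : ℂ) := by
  set t := hA.posSemidef.sqrt⁻¹.trace
  have hopt_eq : (A⁻¹ * ((t / P) • hA.posSemidef.sqrt)).trace = t ^ 2 / P := by
    rw [Matrix.mul_smul, trace_smul, hA.inv_mul_sqrt, smul_eq_mul]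
    ring
  refine ⟨?_, hopt_eq⟩
  have hCS : ‖t‖ ^ 2 ≤ (Z⁻¹.trace).re * ((A⁻¹ * Z).trace).re := by
    rw [hA.trace_inv_mul_eq]
    exact hZ.norm_trace_sq_le _
  have hobj_nonneg : 0 ≤ ((A⁻¹ * Z).trace).re := by
    rw [hA.trace_inv_mul_eq]
    exact (Complex.nonneg_iff.1 (hZ.posSemidef.mul_mul_conjTranspose_same _).trace_nonneg).1
  rw [hopt_eq, ge_iff_le, Complex.div_ofReal_re]
  calc (t ^ 2).re / P ≤ ‖t‖ ^ 2 / P := by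
        gcongr
        exact (Complex.re_le_norm _).trans (norm_pow t 2).le
    _ ≤ (Z⁻¹.trace).re * ((A⁻¹ * Z).trace).re / P := by gcongr
    _ ≤ P * ((A⁻¹ * Z).trace).re / P := by gcongr
    _ = ((A⁻¹ * Z).trace).re := by field_simp
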